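/- arXiv:0802.0185 — 2 statements merged into one kernel-verified Lean document; each statement's English description precedes it below -/
import Mathlib

section
/- Let F be a free group with finite symmetric free generating set S, G = (V,E) a finite S-labeled directed multigraph, and X ⊆ V^F the associated graph subshift. If there exists a shift-invariant Borel probability measure μ on X, then there exists a periodic treequence x ∈ X. Moreover, if μ{x ∈ X : x(id) = v} > 0 for some vertex v, then there is a periodic treequence x ∈ X with x(id) = v. -/
open MeasureTheory

/-- The group element of the free group corresponding to a label in the symmetric
free generating set, modeled by `ι × Bool`. -/
def genElem {ι : Type} (l : ι × Bool) : FreeGroup ι :=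
  if l.2 then FreeGroup.of l.1 else (FreeGroup.of l.1)⁻¹

/-- Membership in the graph subshift determined by the labeled graph `E`. -/
def InSubshift {ι V : Type} (E : V → V → ι × Bool → Prop) (x : FreeGroup ι → V) : Prop :=
  ∀ (f : FreeGroup ι) (l : ι × Bool), E (x f) (x (f * genElem l)) l

/-!
For a generator `s`, the joint law of `(x 1, x s⁻¹)` under `μ` is a nonnegative matrix `P_s`
supported on the edges labelled `s`, because `μ`-almost every `x` lies in the subshift. Its row
sums are the law `p` of `x 1`, and by shift invariance so are its column sums. Rational solutions
of a linear system with integer coefficients are dense in its real solutions, so the `P_s` can be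
replaced by natural-number matrices `N_s` with smaller support and common margins `c`, positive
wherever `p` is. Blowing up each vertex `a` into `c a` points turns every `N_s` into a permutation
`τ_s` of a finite set `T` that moves points along edges labelled `s`. The induced action of the free
group on `T` yields the treequence `f ↦ π (f⁻¹ • t₀)`, which is invariant under the kernel of the
action, a subgroup of finite index.
-/

section IntegerLinearSystems

variable {κ : Type*} [Fintype κ]

def intSystemSolutions (K : Type*) [AddCommGroup K] (L : List (κ → ℤ)) : Set (κ → K) :=
  {z | ∀ A ∈ L, Fintype.linearCombination ℤ z A = 0}

theorem mem_intSystemSolutions_cons {K : Type*} [AddCommGroup K] {A : κ → ℤ} {L : List (κ → ℤ)}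
    {z : κ → K} :
    z ∈ intSystemSolutions K (A :: L) ↔
      Fintype.linearCombination ℤ z A = 0 ∧ z ∈ intSystemSolutions K L :=
  List.forall_mem_cons

theorem map_fintypeLinearCombination_int {K K' : Type*} [AddCommGroup K] [AddCommGroup K']
    (f : K →+ K') (z : κ → K) (A : κ → ℤ) :
    f (Fintype.linearCombination ℤ z A) = Fintype.linearCombination ℤ (f ∘ z) A := by
  simp [Fintype.linearCombination_apply, map_sum, map_zsmul]

theorem mem_intSystemSolutions_map_pivot {K : Type*} [AddCommGroup K] {A : κ → ℤ}
    {L : List (κ → ℤ)} (j : κ) {z : κ → K} (hz : z ∈ intSystemSolutions K (A :: L)) :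
    z ∈ intSystemSolutions K (L.map fun B => A j • B - B j • A) := by
  rw [mem_intSystemSolutions_cons] at hz
  simp only [intSystemSolutions, List.forall_mem_map, Set.mem_ofPred_eq, map_sub, map_zsmul]
  intro B hB
  rw [hz.1, hz.2 B hB, smul_zero, smul_zero, sub_zero]

variable [DecidableEq κ]

def eliminate {K : Type*} [Field K] (A : κ → ℤ) (j : κ) (z : κ → K) : κ → K :=
  z - (Fintype.linearCombination ℤ z A / A j) • Pi.single j 1

theorem linearCombination_eliminate {K : Type*} [Field K] (A B : κ → ℤ) (j : κ) (z : κ → K) :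
    Fintype.linearCombination ℤ (eliminate A j z) B =
      Fintype.linearCombination ℤ z B - Fintype.linearCombination ℤ z A / A j * B j := by
  simp only [eliminate, Fintype.linearCombination_apply, zsmul_eq_mul, Pi.sub_apply,
    Pi.smul_apply, Pi.single_apply, smul_eq_mul, mul_ite, mul_one, mul_zero, smul_sub, smul_ite,
    smul_zero, Finset.sum_sub_distrib, Finset.sum_ite_eq', Finset.mem_univ, ↓reduceIte,
    sub_right_inj]
  ring

theorem eliminate_of_linearCombination_eq_zero {K : Type*} [Field K] {A : κ → ℤ} (j : κ)
    {z : κ → K} (hz : Fintype.linearCombination ℤ z A = 0) : eliminate A j z = z := by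
  simp [eliminate, hz]

theorem eliminate_ratCast (A : κ → ℤ) (j : κ) (y : κ → ℚ) :
    eliminate A j (fun k => (y k : ℝ)) = fun k => ((eliminate A j y k : ℚ) : ℝ) := by
  have := map_fintypeLinearCombination_int (Rat.castHom ℝ : ℚ →+* ℝ).toAddMonoidHom y A
  ext k
  simp only [RingHom.toAddMonoidHom_eq_coe, AddMonoidHom.coe_coe, Rat.coe_castHom,
    Function.comp_def] at this
  simp only [eliminate, Pi.sub_apply, Pi.smul_apply, Pi.single_apply, ← this]
  split_ifs <;> simp

theorem continuous_eliminate (A : κ → ℤ) (j : κ) : Continuous (eliminate (K := ℝ) A j) := by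
  unfold eliminate
  simp only [Fintype.linearCombination_apply]
  fun_prop

theorem eliminate_mem_intSystemSolutions {K : Type*} [Field K] [CharZero K] {A : κ → ℤ}
    {L : List (κ → ℤ)} {j : κ} (hj : A j ≠ 0) {z : κ → K}
    (hz : z ∈ intSystemSolutions K (L.map fun B => A j • B - B j • A)) :
    eliminate A j z ∈ intSystemSolutions K (A :: L) := by
  have hj' : (A j : K) ≠ 0 := by exact_mod_cast hj
  simp only [intSystemSolutions, List.forall_mem_map, Set.mem_ofPred_eq, map_sub, map_zsmul,
    sub_eq_zero] at hz
  refine mem_intSystemSolutions_cons.2 ⟨?_, fun B hB => ?_⟩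
  · rw [linearCombination_eliminate, div_mul_cancel₀ _ hj', sub_self]
  · rw [linearCombination_eliminate, div_mul_eq_mul_div, sub_eq_zero, eq_div_iff hj']
    simpa only [zsmul_eq_mul, mul_comm] using hz B hB

/-- `eliminate A j` is a continuous retraction onto `A = 0` commuting with `ℚ → ℝ`, so it carries
rational approximations for the system pivoted at `A j` to rational approximations for `A :: L`. -/
theorem subset_closure_ratCast_intSystemSolutions (L : List (κ → ℤ)) :
    intSystemSolutions ℝ L ⊆
      closure ((fun (y : κ → ℚ) k => (y k : ℝ)) '' intSystemSolutions ℚ L) := by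
  match L with
  | [] =>
    have hdense := DenseRange.piMap fun _ : κ => Rat.denseRange_cast (𝕜 := ℝ)
    have hall : intSystemSolutions ℚ ([] : List (κ → ℤ)) = Set.univ := by
      simp [intSystemSolutions]
    rw [hall, Set.image_univ]
    exact fun x _ => hdense x
  | A :: L =>
    intro x hx
    by_cases hA : A = 0
    · refine closure_mono (Set.image_mono fun y hy => ?_)
        (subset_closure_ratCast_intSystemSolutions L (mem_intSystemSolutions_cons.1 hx).2)
      exact mem_intSystemSolutions_cons.2 ⟨by rw [hA, map_zero], hy⟩
    obtain ⟨j, hj⟩ := Function.ne_iff.1 hA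
    have hpivot := subset_closure_ratCast_intSystemSolutions (L.map fun B => A j • B - B j • A)
      (mem_intSystemSolutions_map_pivot j hx)
    rw [← eliminate_of_linearCombination_eq_zero j (mem_intSystemSolutions_cons.1 hx).1]
    refine closure_mono ?_ (image_closure_subset_closure_image (continuous_eliminate A j)
      (Set.mem_image_of_mem _ hpivot))
    rintro _ ⟨_, ⟨y, hy, rfl⟩, rfl⟩
    exact ⟨_, eliminate_mem_intSystemSolutions hj hy, (eliminate_ratCast A j y).symm⟩
termination_by L.length

theorem exists_mem_intSystemSolutions_rat_pos {L : List (κ → ℤ)} {x : κ → ℝ}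
    (hx : x ∈ intSystemSolutions ℝ L) :
    ∃ y ∈ intSystemSolutions ℚ L, ∀ k, 0 < x k → 0 < y k := by
  let U : Set (κ → ℝ) := ⋂ k ∈ Finset.univ.filter (0 < x ·), {z | 0 < z k}
  have hU : IsOpen U :=
    isOpen_biInter_finset fun k _ => isOpen_lt continuous_const (continuous_apply k)
  have hxU : x ∈ U := by simp [U]
  obtain ⟨_, hzU, y, hy, rfl⟩ :=
    mem_closure_iff.1 (subset_closure_ratCast_intSystemSolutions L hx) U hU hxU
  refine ⟨y, hy, fun k hk => ?_⟩
  simp only [U, Set.mem_iInter] at hzU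
  simpa using hzU k (by simpa using hk)

end IntegerLinearSystems

theorem exists_pos_nat_mul_eq_natCast {κ : Type*} [Fintype κ] (y : κ → ℚ) (hy : 0 ≤ y) :
    ∃ D : ℕ, 0 < D ∧ ∃ N : κ → ℕ, ∀ k, (N k : ℚ) = D * y k := by
  refine ⟨∏ k, (y k).den, Finset.prod_pos fun k _ => (y k).den_pos,
    fun k => (∏ k, (y k).den) / (y k).den * (y k).num.toNat, fun k => ?_⟩
  have hdvd : (y k).den ∣ ∏ k, (y k).den := Finset.dvd_prod_of_mem _ (Finset.mem_univ k)
  have hden : ((y k).den : ℚ) ≠ 0 := by exact_mod_cast (y k).den_nz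
  have hnum : ((y k).num.toNat : ℚ) = (y k).num := by
    exact_mod_cast Int.toNat_of_nonneg (Rat.num_nonneg.2 (hy k))
  calc (((∏ k, (y k).den) / (y k).den * (y k).num.toNat : ℕ) : ℚ)
      = (∏ k, (y k).den : ℕ) * ((y k).num / (y k).den) := by
        rw [Nat.cast_mul, Nat.cast_div hdvd hden, hnum]; ring
    _ = (∏ k, (y k).den : ℕ) * y k := by rw [Rat.num_div_den]

section Flows

variable {ι V : Type*} [Fintype ι] [Fintype V] [DecidableEq ι] [DecidableEq V]

/-- Coordinate `inl (i, a, b)` is the entry `(a, b)` of the `i`-th matrix and `inr a` the common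
value of its `a`-th row and column sums; the coordinates in `S` are forced to vanish. -/
noncomputable def flowEquations (S : Finset ((ι × V × V) ⊕ V)) : List ((ι × V × V) ⊕ V → ℤ) :=
  (Finset.univ : Finset (ι × V)).toList.map
      (fun q => ∑ b, Pi.single (Sum.inl (q.1, q.2, b)) 1 - Pi.single (Sum.inr q.2) 1) ++
    (Finset.univ : Finset (ι × V)).toList.map
      (fun q => ∑ a, Pi.single (Sum.inl (q.1, a, q.2)) 1 - Pi.single (Sum.inr q.2) 1) ++
    S.toList.map fun k => Pi.single k 1

theorem mem_intSystemSolutions_flowEquations {K : Type*} [AddCommGroup K]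
    {S : Finset ((ι × V × V) ⊕ V)} {z : (ι × V × V) ⊕ V → K} :
    z ∈ intSystemSolutions K (flowEquations S) ↔
      (∀ i a, ∑ b, z (Sum.inl (i, a, b)) = z (Sum.inr a)) ∧
      (∀ i b, ∑ a, z (Sum.inl (i, a, b)) = z (Sum.inr b)) ∧ ∀ k ∈ S, z k = 0 := by
  simp only [intSystemSolutions, flowEquations, Set.mem_ofPred_eq, List.forall_mem_append,
    List.forall_mem_map, Finset.mem_toList, Finset.mem_univ, true_implies, Prod.forall, map_sub,
    map_sum, Fintype.linearCombination_apply_single, one_smul, sub_eq_zero, and_assoc]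

theorem exists_nat_flow_of_real_flow (P : ι → V → V → ℝ) (p : V → ℝ)
    (hP : ∀ i a b, 0 ≤ P i a b) (hp : ∀ a, 0 ≤ p a)
    (hrow : ∀ i a, ∑ b, P i a b = p a) (hcol : ∀ i b, ∑ a, P i a b = p b) :
    ∃ (N : ι → V → V → ℕ) (c : V → ℕ), (∀ i a, ∑ b, N i a b = c a) ∧
      (∀ i b, ∑ a, N i a b = c b) ∧ (∀ i a b, 0 < N i a b → 0 < P i a b) ∧
      ∀ a, 0 < p a → 0 < c a := by
  let x : (ι × V × V) ⊕ V → ℝ := Sum.elim (fun q => P q.1 q.2.1 q.2.2) p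
  have hx : 0 ≤ x := by rintro (⟨i, a, b⟩ | a) <;> simp [x, hP, hp]
  have hxsol : x ∈ intSystemSolutions ℝ (flowEquations (Finset.univ.filter (x · = 0))) :=
    mem_intSystemSolutions_flowEquations.2 ⟨hrow, hcol, fun k hk => (Finset.mem_filter.1 hk).2⟩
  obtain ⟨y, hysol, hypos⟩ := exists_mem_intSystemSolutions_rat_pos hxsol
  obtain ⟨hyrow, hycol, hyzero⟩ := mem_intSystemSolutions_flowEquations.1 hysol
  have hy_eq_zero : ∀ k, x k = 0 → y k = 0 := fun k hk => hyzero k (by simpa using hk)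
  have hy : 0 ≤ y := fun k => (hx k).eq_or_lt.elim (fun h => (hy_eq_zero k h.symm).ge)
    fun h => (hypos k h).le
  obtain ⟨D, hD, M, hM⟩ := exists_pos_nat_mul_eq_natCast y hy
  have hMpos : ∀ k, 0 < M k ↔ 0 < x k := by
    intro k
    rw [← Nat.cast_pos (α := ℚ), hM, mul_pos_iff_of_pos_left (by exact_mod_cast hD)]
    exact ⟨fun h => (hx k).lt_of_ne fun h0 => h.ne' (hy_eq_zero k h0.symm), hypos k⟩
  refine ⟨fun i a b => M (Sum.inl (i, a, b)), fun a => M (Sum.inr a), fun i a => ?_,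
    fun i b => ?_, fun i a b => (hMpos _).1, fun a => (hMpos (Sum.inr a)).2⟩
  · exact_mod_cast (by simp [hM, ← Finset.mul_sum, hyrow] :
      ∑ b, (M (Sum.inl (i, a, b)) : ℚ) = M (Sum.inr a))
  · exact_mod_cast (by simp [hM, ← Finset.mul_sum, hycol] :
      ∑ a, (M (Sum.inl (i, a, b)) : ℚ) = M (Sum.inr b))

end Flows

theorem exists_perm_sigma_fin_of_sum_eq {V : Type*} [Fintype V] (N : V → V → ℕ) (c : V → ℕ)
    (hrow : ∀ a, ∑ b, N a b = c a) (hcol : ∀ b, ∑ a, N a b = c b) :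
    ∃ σ : Equiv.Perm (Σ a, Fin (c a)), ∀ t, 0 < N t.1 (σ t).1 := by
  let byRow : (Σ a, Fin (c a)) ≃ Σ a, Σ b, Fin (N a b) :=
    Equiv.sigmaCongrRight fun a => Fintype.equivOfCardEq (by simp [hrow a])
  let byCol : (Σ b, Fin (c b)) ≃ Σ b, Σ a, Fin (N a b) :=
    Equiv.sigmaCongrRight fun b => Fintype.equivOfCardEq (by simp [hcol b])
  let swap : (Σ a, Σ b, Fin (N a b)) ≃ Σ b, Σ a, Fin (N a b) :=
    ⟨fun e => ⟨e.2.1, e.1, e.2.2⟩, fun e => ⟨e.2.1, e.1, e.2.2⟩, fun _ => rfl, fun _ => rfl⟩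
  exact ⟨byRow.trans (swap.trans byCol.symm), fun t => (byRow t).2.2.pos⟩

theorem exists_periodic_inSubshift_of_perm {ι V : Type} (E : V → V → ι × Bool → Prop)
    {T : Type} [Finite T] (π : T → V) (τ : ι → Equiv.Perm T)
    (hτ : ∀ i t, E (π t) (π (τ i t)) (i, false) ∧ E (π (τ i t)) (π t) (i, true)) (t₀ : T) :
    ∃ x : FreeGroup ι → V, InSubshift E x ∧
      (∃ H : Subgroup (FreeGroup ι), H.FiniteIndex ∧
        ∀ f ∈ H, ∀ h : FreeGroup ι, x (f⁻¹ * h) = x h) ∧ x 1 = π t₀ := by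
  let ρ := FreeGroup.lift τ
  refine ⟨fun h => π (ρ h⁻¹ t₀), ?_, ⟨ρ.ker, Subgroup.finiteIndex_ker ρ, fun f hf h => ?_⟩,
    by simp⟩
  · rintro f ⟨i, _ | _⟩
    · simpa [genElem, ρ] using (hτ i (ρ f⁻¹ t₀)).1
    · simpa [genElem, ρ] using (hτ i ((τ i).symm (ρ f⁻¹ t₀))).2
  · simp [MonoidHom.mem_ker.1 hf]

theorem sum_measure_inter_preimage_singleton {α β : Type*} [MeasurableSpace α]
    [MeasurableSpace β] [Fintype β] [MeasurableSingletonClass β] (μ : Measure α) {f : α → β}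
    (hf : Measurable f) (S : Set α) : ∑ b, μ (S ∩ f ⁻¹' {b}) = μ S := by
  have := sum_measure_preimage_singleton (μ := μ.restrict S) Finset.univ
    fun b _ => hf (measurableSet_singleton b)
  simpa [Measure.restrict_apply (hf (measurableSet_singleton _)), Set.inter_comm] using this

section ShiftInvariantMeasures

variable {ι V : Type} [MeasurableSpace V] {μ : Measure (FreeGroup ι → V)}

theorem measure_eval_eq_eq_measure_eval_one_eq [MeasurableSingletonClass V]
    (hinv : ∀ g : FreeGroup ι, Measure.map (fun x (f : FreeGroup ι) => x (g⁻¹ * f)) μ = μ)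
    (g : FreeGroup ι) (v : V) : μ {x | x g = v} = μ {x | x 1 = v} := by
  conv_rhs => rw [← hinv g⁻¹]
  have hmeas : MeasurableSet {x : FreeGroup ι → V | x 1 = v} :=
    (measurableSet_singleton v).preimage (measurable_pi_apply 1)
  rw [Measure.map_apply (by fun_prop) hmeas]
  simp

theorem edges_of_measure_ne_zero {E : V → V → ι × Bool → Prop}
    (hXfull : μ {x | ¬ InSubshift E x} = 0) {i : ι} {a b : V}
    (h : μ ({x | x 1 = a} ∩ {x | x (genElem (i, false)) = b}) ≠ 0) :
    E a b (i, false) ∧ E b a (i, true) := by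
  obtain ⟨x, ⟨rfl, rfl⟩, hx⟩ := nonempty_of_measure_ne_zero (measure_sdiff_null hXfull ▸ h)
  have hx : InSubshift E x := not_not.1 hx
  exact ⟨by simpa using hx 1 (i, false),
    by simpa [genElem] using hx (genElem (i, false)) (i, true)⟩

end ShiftInvariantMeasures

theorem exists_periodic_inSubshift_of_measure_pos {ι V : Type} [Fintype ι] [Fintype V]
    [MeasurableSpace V] [MeasurableSingletonClass V] (E : V → V → ι × Bool → Prop)
    (μ : Measure (FreeGroup ι → V)) [IsFiniteMeasure μ]
    (hXfull : μ {x | ¬ InSubshift E x} = 0)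
    (hinv : ∀ g : FreeGroup ι, Measure.map (fun x (f : FreeGroup ι) => x (g⁻¹ * f)) μ = μ)
    (v : V) (hv : 0 < μ {x | x 1 = v}) :
    ∃ x : FreeGroup ι → V, InSubshift E x ∧
      (∃ H : Subgroup (FreeGroup ι), H.FiniteIndex ∧
        ∀ f ∈ H, ∀ h : FreeGroup ι, x (f⁻¹ * h) = x h) ∧ x 1 = v := by
  classical
  let P : ι → V → V → ℝ := fun i a b =>
    (μ ({x | x 1 = a} ∩ {x | x (genElem (i, false)) = b})).toReal
  let p : V → ℝ := fun a => (μ {x | x 1 = a}).toReal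
  have hsum : ∀ (g : FreeGroup ι) (S : Set (FreeGroup ι → V)),
      ∑ w, (μ (S ∩ {x | x g = w})).toReal = (μ S).toReal := fun g S => by
    rw [← ENNReal.toReal_sum fun _ _ => measure_ne_top μ _,
      ← sum_measure_inter_preimage_singleton μ (measurable_pi_apply g) S]
    rfl
  have hrow : ∀ i a, ∑ b, P i a b = p a := fun i a => hsum _ _
  have hcol : ∀ i b, ∑ a, P i a b = p b := fun i b => by
    show _ = (μ {x | x 1 = b}).toReal
    rw [← measure_eval_eq_eq_measure_eval_one_eq hinv (genElem (i, false)), ← hsum 1]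
    simp only [P, Set.inter_comm]
  obtain ⟨N, c, hNrow, hNcol, hNP, hc⟩ := exists_nat_flow_of_real_flow P p
    (fun _ _ _ => ENNReal.toReal_nonneg) (fun _ => ENNReal.toReal_nonneg) hrow hcol
  choose σ hσ using fun i => exists_perm_sigma_fin_of_sum_eq (N i) c (hNrow i) (hNcol i)
  have hedges : ∀ i t, E t.1 (σ i t).1 (i, false) ∧ E (σ i t).1 t.1 (i, true) := fun i t =>
    edges_of_measure_ne_zero hXfull (ENNReal.toReal_pos_iff.1 (hNP _ _ _ (hσ i t))).1.ne'
  exact exists_periodic_inSubshift_of_perm E Sigma.fst σ hedges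
    ⟨v, 0, hc v (ENNReal.toReal_pos hv.ne' (measure_ne_top μ _))⟩

/-- if the graph subshift over a finitely generated free group determined
by a finite graph carries a shift-invariant Borel probability measure, then it contains
a periodic treequence; moreover if the cylinder `{x | x(id) = v}` has positive measure,
the periodic treequence can be chosen with `x(id) = v`. -/
theorem periodic_treequence_of_invariant_measure
    {ι V : Type} [Fintype ι] [Fintype V]
    [MeasurableSpace V] [DiscreteMeasurableSpace V]
    (E : V → V → ι × Bool → Prop)
    (μ : Measure ((f : FreeGroup ι) → V)) [IsProbabilityMeasure μ]
    (hXfull : μ {x | ¬ InSubshift E x} = 0)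
    (hinv : ∀ g : FreeGroup ι,
      Measure.map (fun x (f : FreeGroup ι) => x (g⁻¹ * f)) μ = μ) :
    (∃ x : FreeGroup ι → V, InSubshift E x ∧
      ∃ H : Subgroup (FreeGroup ι), H.FiniteIndex ∧
        ∀ f ∈ H, ∀ h : FreeGroup ι, x (f⁻¹ * h) = x h) ∧
    (∀ v : V, 0 < μ {x | x 1 = v} →
      ∃ x : FreeGroup ι → V, InSubshift E x ∧
        (∃ H : Subgroup (FreeGroup ι), H.FiniteIndex ∧
          ∀ f ∈ H, ∀ h : FreeGroup ι, x (f⁻¹ * h) = x h) ∧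
        x 1 = v) := by
  refine ⟨?_, exists_periodic_inSubshift_of_measure_pos E μ hXfull hinv⟩
  have hsum : ∑ v, μ {x | x 1 = v} = 1 := by
    simpa [Set.preimage] using
      sum_measure_inter_preimage_singleton μ (measurable_pi_apply 1) Set.univ
  obtain ⟨v, -, hv⟩ := Finset.exists_ne_zero_of_sum_ne_zero (hsum ▸ one_ne_zero)
  obtain ⟨x, hx, hper, -⟩ :=
    exists_periodic_inSubshift_of_measure_pos E μ hXfull hinv v (pos_iff_ne_zero.2 hv)
  exact ⟨x, hx, hper⟩
end

section
/- With the hypotheses of the bi-Lipschitz perturbation result (X proper Gromov-hyperbolic, φ : H → Isom(X) injective onto a quasi-convex cocompact subgroup, p ∈ X), there exists ε₀ > 0 such that every ε-perturbation φ_ε of φ with 0 ≤ ε ≤ ε₀ is injective. -/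
/-!
If `φ g p` and `φ h p` are far apart, subdivide a geodesic between them into steps of length
between `L` and `2 L`; by quasi-convexity and cocompactness each subdivision point is close to an
orbit point `φ uᵢ p`. Consecutive and next-to-consecutive `uᵢ` differ by elements of a finite set
(proper discontinuity), so for small `ε` the points `φε uᵢ p` have almost the same mutual
distances. In a hyperbolic space such a chain, with long steps and small Gromov products at the
joints, makes linear progress, hence `φε g p ≠ φε h p`. The finitely many remaining nontrivial
`g⁻¹ h` are handled by the same continuity estimate at a point moved by `φ (g⁻¹ h)`.
-/

open Set

/-- `s` is (the image of) a geodesic segment from `x` to `y`. -/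
def IsGeodesicSegment {X : Type} [MetricSpace X] (x y : X) (s : Set X) : Prop :=
  ∃ γ : ℝ → X, γ 0 = x ∧ γ (dist x y) = y ∧
    (∀ t ∈ Icc (0:ℝ) (dist x y), ∀ t' ∈ Icc (0:ℝ) (dist x y),
      dist (γ t) (γ t') = |t - t'|) ∧
    s = γ '' Icc 0 (dist x y)

/-- A geodesic metric space: any two points are joined by a geodesic segment. -/
def GeodesicSpace (X : Type) [MetricSpace X] : Prop :=
  ∀ x y : X, ∃ s, IsGeodesicSegment x y s

/-- `δ`-hyperbolicity (thin triangles): a geodesic space in which each side of every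
geodesic triangle lies in the `δ`-neighborhood of the union of the other two sides. -/
def DeltaHyperbolic (X : Type) [MetricSpace X] (δ : ℝ) : Prop :=
  GeodesicSpace X ∧
  ∀ (x y z : X) (s₁ s₂ s₃ : Set X),
    IsGeodesicSegment x y s₁ → IsGeodesicSegment y z s₂ → IsGeodesicSegment z x s₃ →
    ∀ p ∈ s₁, ∃ q ∈ s₂ ∪ s₃, dist p q ≤ δ

/-- `q` is a `(λ,c)`-quasi-geodesic on the set `I ⊆ ℝ`. -/
def QuasiGeodesicOn {X : Type} [MetricSpace X] (q : ℝ → X) (I : Set ℝ) (lam c : ℝ) : Prop :=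
  ∀ t ∈ I, ∀ t' ∈ I,
    lam⁻¹ * |t - t'| - c ≤ dist (q t) (q t') ∧ dist (q t) (q t') ≤ lam * |t - t'| + c

/-- `q` is an `(M,λ,c)`-local-quasi-geodesic on `I`: its restriction to every
subinterval of length at most `M` is a `(λ,c)`-quasi-geodesic. -/
def LocalQuasiGeodesicOn {X : Type} [MetricSpace X] (q : ℝ → X) (I : Set ℝ)
    (M lam c : ℝ) : Prop :=
  ∀ a b : ℝ, a ∈ I → b ∈ I → a ≤ b → b - a ≤ M →
    QuasiGeodesicOn q (I ∩ Icc a b) lam c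

/-- A subset `A` of a metric space is quasi-convex. -/
def QuasiConvexSet {X : Type} [MetricSpace X] (A : Set X) : Prop :=
  ∃ ε : ℝ, 0 ≤ ε ∧ ∀ x ∈ A, ∀ y ∈ A, ∀ s : Set X, IsGeodesicSegment x y s →
    ∀ p ∈ s, ∃ q ∈ A, dist p q ≤ ε

open Filter Topology

section Geometry

variable {X : Type} [MetricSpace X]

namespace IsGeodesicSegment

variable {x y : X} {s : Set X}

theorem left_mem (hs : IsGeodesicSegment x y s) : x ∈ s := by
  obtain ⟨γ, h0, -, -, rfl⟩ := hs
  exact ⟨0, ⟨le_rfl, dist_nonneg⟩, h0⟩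

theorem right_mem (hs : IsGeodesicSegment x y s) : y ∈ s := by
  obtain ⟨γ, -, h1, -, rfl⟩ := hs
  exact ⟨dist x y, ⟨dist_nonneg, le_rfl⟩, h1⟩

theorem dist_add_dist {z : X} (hs : IsGeodesicSegment x y s) (hz : z ∈ s) :
    dist x z + dist z y = dist x y := by
  obtain ⟨γ, h0, h1, hγ, rfl⟩ := hs
  obtain ⟨t, ht, rfl⟩ := hz
  have hx := hγ 0 ⟨le_rfl, dist_nonneg⟩ t ht
  have hy := hγ t ht _ ⟨dist_nonneg, le_rfl⟩
  rw [h0] at hx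
  rw [h1] at hy
  rw [hx, hy, abs_of_nonpos (by linarith [ht.1]), abs_of_nonpos (by linarith [ht.2])]
  ring

theorem exists_continuousOn (hs : IsGeodesicSegment x y s) :
    ∃ γ : ℝ → X, ContinuousOn γ (Icc 0 (dist x y)) ∧ s = γ '' Icc 0 (dist x y) := by
  obtain ⟨γ, -, -, hγ, rfl⟩ := hs
  refine ⟨γ, LipschitzOnWith.continuousOn (K := 1) ?_, rfl⟩
  refine LipschitzOnWith.of_dist_le_mul fun t ht t' ht' => ?_
  rw [hγ t ht t' ht', NNReal.coe_one, one_mul, Real.dist_eq]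

theorem isCompact (hs : IsGeodesicSegment x y s) : IsCompact s := by
  obtain ⟨γ, hγ, rfl⟩ := hs.exists_continuousOn
  exact isCompact_Icc.image_of_continuousOn hγ

theorem isPreconnected (hs : IsGeodesicSegment x y s) : IsPreconnected s := by
  obtain ⟨γ, hγ, rfl⟩ := hs.exists_continuousOn
  exact isPreconnected_Icc.image γ hγ

end IsGeodesicSegment

/-- The Gromov product `(x | y)_w`. -/
noncomputable def gromovProduct (w x y : X) : ℝ := (dist w x + dist w y - dist x y) / 2

theorem gromovProduct_comm (w x y : X) : gromovProduct w x y = gromovProduct w y x := by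
  rw [gromovProduct, gromovProduct, dist_comm x y, add_comm (dist w x)]

theorem gromovProduct_add_gromovProduct (x y z : X) :
    gromovProduct x y z + gromovProduct y x z = dist x y := by
  rw [gromovProduct, gromovProduct, dist_comm y x]
  ring

theorem IsGeodesicSegment.gromovProduct_le_dist {x y z : X} {s : Set X}
    (hs : IsGeodesicSegment x y s) (w : X) (hz : z ∈ s) : gromovProduct w x y ≤ dist w z := by
  have := hs.dist_add_dist hz
  have := dist_triangle_right w x z
  have := dist_triangle w z y
  rw [gromovProduct]
  linarith

/-- Gromov's four-point condition with constant `δ`. -/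
def IsGromovHyperbolic (X : Type) [MetricSpace X] (δ : ℝ) : Prop :=
  ∀ w x y z : X, min (gromovProduct w x y) (gromovProduct w y z) - δ ≤ gromovProduct w x z

namespace DeltaHyperbolic

variable {δ : ℝ}

/-- The side `[x, y]` is covered by the closed `δ`-neighbourhoods of the two other sides, each
containing one of its endpoints; as `[x, y]` is connected, they meet on it. -/
theorem exists_mem_dist_le_of_triangle (hδ : 0 ≤ δ) (hX : DeltaHyperbolic X δ)
    {x y w : X} {s s₂ s₃ : Set X} (hs : IsGeodesicSegment x y s)
    (hs₂ : IsGeodesicSegment y w s₂) (hs₃ : IsGeodesicSegment w x s₃) :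
    ∃ z ∈ s, (∃ q₂ ∈ s₂, dist z q₂ ≤ δ) ∧ ∃ q₃ ∈ s₃, dist z q₃ ≤ δ := by
  have hcover : s ⊆ Metric.cthickening δ s₂ ∪ Metric.cthickening δ s₃ := by
    intro z hz
    obtain ⟨q, hq | hq, hzq⟩ := hX.2 x y w s s₂ s₃ hs hs₂ hs₃ z hz
    · exact Or.inl (Metric.mem_cthickening_of_dist_le z q δ s₂ hq hzq)
    · exact Or.inr (Metric.mem_cthickening_of_dist_le z q δ s₃ hq hzq)
  obtain ⟨z, hz, hz₂, hz₃⟩ := isPreconnected_closed_iff.mp hs.isPreconnected _ _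
    Metric.isClosed_cthickening Metric.isClosed_cthickening hcover
    ⟨y, hs.right_mem, Metric.self_subset_cthickening _ hs₂.left_mem⟩
    ⟨x, hs.left_mem, Metric.self_subset_cthickening _ hs₃.right_mem⟩
  rw [hs₂.isCompact.cthickening_eq_biUnion_closedBall hδ, mem_iUnion₂] at hz₂
  rw [hs₃.isCompact.cthickening_eq_biUnion_closedBall hδ, mem_iUnion₂] at hz₃
  obtain ⟨q₂, hq₂, hzq₂⟩ := hz₂
  obtain ⟨q₃, hq₃, hzq₃⟩ := hz₃
  exact ⟨z, hz, ⟨q₂, hq₂, hzq₂⟩, q₃, hq₃, hzq₃⟩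

theorem exists_mem_dist_le_gromovProduct_add (hδ : 0 ≤ δ) (hX : DeltaHyperbolic X δ)
    {x y : X} {s : Set X} (hs : IsGeodesicSegment x y s) (w : X) :
    ∃ z ∈ s, dist w z ≤ gromovProduct w x y + 2 * δ := by
  obtain ⟨s₂, hs₂⟩ := hX.1 y w
  obtain ⟨s₃, hs₃⟩ := hX.1 w x
  obtain ⟨z, hz, ⟨q₂, hq₂, hzq₂⟩, q₃, hq₃, hzq₃⟩ :=
    hX.exists_mem_dist_le_of_triangle hδ hs hs₂ hs₃
  refine ⟨z, hz, ?_⟩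
  have := hs.dist_add_dist hz
  have := hs₂.dist_add_dist hq₂
  have := hs₃.dist_add_dist hq₃
  have := dist_triangle_right w z q₂
  have := dist_triangle_right w z q₃
  have := dist_triangle_right y z q₂
  have := dist_triangle_right x z q₃
  rw [gromovProduct]
  linarith [dist_comm q₂ w, dist_comm q₃ x, dist_comm y w, dist_comm z y]

theorem isGromovHyperbolic (hδ : 0 ≤ δ) (hX : DeltaHyperbolic X δ) :
    IsGromovHyperbolic X (3 * δ) := by
  intro w x y z
  obtain ⟨s, hs⟩ := hX.1 x z
  obtain ⟨m, hm, hwm⟩ := hX.exists_mem_dist_le_gromovProduct_add hδ hs w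
  obtain ⟨s₂, hs₂⟩ := hX.1 z y
  obtain ⟨s₃, hs₃⟩ := hX.1 y x
  obtain ⟨q, hq | hq, hmq⟩ := hX.2 x z y s s₂ s₃ hs hs₂ hs₃ m hm
  · have := hs₂.gromovProduct_le_dist w hq
    rw [gromovProduct_comm w z y] at this
    linarith [min_le_right (gromovProduct w x y) (gromovProduct w y z), dist_triangle w m q]
  · have := hs₃.gromovProduct_le_dist w hq
    rw [gromovProduct_comm w y x] at this
    linarith [min_le_left (gromovProduct w x y) (gromovProduct w y z), dist_triangle w m q]

end DeltaHyperbolic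

namespace IsGromovHyperbolic

variable {δ : ℝ}

theorem nonneg (hX : IsGromovHyperbolic X δ) (w : X) : 0 ≤ δ := by
  have := hX w w w w
  simp only [gromovProduct, dist_self, min_self] at this
  linarith

/-- The chain never turns back: inductively `(x 0 | x (i + 1))_{x i} ≤ K + δ`, so each jump adds
at least `R - 2 (K + δ)` to the distance from `x 0`. -/
theorem le_dist_of_chain (hX : IsGromovHyperbolic X δ) (x : ℕ → X) {m : ℕ} {R K : ℝ}
    (hK : 0 ≤ K) (hjump : ∀ i < m, R ≤ dist (x i) (x (i + 1)))
    (hjoint : ∀ i, i + 2 ≤ m → gromovProduct (x (i + 1)) (x i) (x (i + 2)) ≤ K)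
    (hRK : 2 * (K + δ) < R) :
    m * (R - 2 * (K + δ)) ≤ dist (x 0) (x m) := by
  have hδ := hX.nonneg (x 0)
  have hback : ∀ i, 1 ≤ i → i < m → gromovProduct (x i) (x 0) (x (i + 1)) ≤ K + δ := by
    intro i hi
    induction i, hi using Nat.le_induction with
    | base => intro _; linarith [hjoint 0 (by omega)]
    | succ i hi ih =>
      intro him
      have hsplit := gromovProduct_add_gromovProduct (x i) (x (i + 1)) (x 0)
      rw [gromovProduct_comm (x i)] at hsplit
      have hfour := hX (x (i + 1)) (x i) (x 0) (x (i + 2))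
      have := ih (by omega)
      have := hjump i (by omega)
      have := hjoint i (by omega)
      rcases min_le_iff.mp (show min _ _ ≤ K + δ by linarith) with h | h
      · linarith
      · exact h
  have hprogress : ∀ i ≤ m, i * (R - 2 * (K + δ)) ≤ dist (x 0) (x i) := by
    intro i
    induction i with
    | zero => simp
    | succ i ih =>
      intro him
      have := hjump i (by omega)
      rcases Nat.eq_zero_or_pos i with rfl | hi
      · simp only [Nat.cast_one, one_mul, zero_add]
        linarith
      · have := ih (by omega)
        have := hback i hi (by omega)
        rw [gromovProduct, dist_comm (x i) (x 0)] at this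
        push_cast
        linarith
  exact hprogress m le_rfl

theorem dist_pos_of_chain (hX : IsGromovHyperbolic X δ) (x : ℕ → X) {m : ℕ} (hm : 0 < m)
    {l c : ℝ} (hx : ∀ i j, i ≤ j → j ≤ i + 2 → j ≤ m → |dist (x i) (x j) - ((j : ℝ) - i) * l| ≤ c)
    (hl : 4 * c + 2 * δ < l) : 0 < dist (x 0) (x m) := by
  have hc : 0 ≤ c := (abs_nonneg _).trans (hx 0 1 (by omega) (by omega) hm)
  have hstep : ∀ i k, k ≤ 2 → i + k ≤ m →
      |dist (x i) (x (i + k)) - k * l| ≤ c := by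
    intro i k hk hik
    simpa using hx i (i + k) (by omega) (by omega) hik
  have hjump : ∀ i < m, l - c ≤ dist (x i) (x (i + 1)) := by
    intro i hi
    have := hstep i 1 (by omega) hi
    rw [abs_le] at this
    push_cast at this
    linarith
  have hjoint : ∀ i, i + 2 ≤ m → gromovProduct (x (i + 1)) (x i) (x (i + 2)) ≤ 3 * c / 2 := by
    intro i hi
    have h₁ := abs_le.mp (hstep i 1 (by omega) (by omega))
    have h₂ := abs_le.mp (hstep (i + 1) 1 (by omega) (by omega))
    have h₃ := abs_le.mp (hstep i 2 (by omega) hi)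
    rw [gromovProduct, dist_comm (x (i + 1)) (x i)]
    push_cast at h₁ h₂ h₃
    linarith [h₁.2, h₂.2, h₃.1]
  have hprogress := hX.le_dist_of_chain x (by positivity) hjump hjoint (by linarith)
  have hm' : (0 : ℝ) < m := by exact_mod_cast hm
  exact (mul_pos hm' (by linarith)).trans_le hprogress

end IsGromovHyperbolic

theorem IsGeodesicSegment.exists_chain {ι : Type*} (o : ι → X)
    {a b : ι} {s : Set X} (hs : IsGeodesicSegment (o a) (o b) s) {R : ℝ} (hR : 0 ≤ R)
    (hnear : ∀ z ∈ s, ∃ u, dist z (o u) ≤ R) {m : ℕ} (hm : 0 < m) :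
    ∃ u : ℕ → ι, u 0 = a ∧ u m = b ∧ ∀ i j, i ≤ j → j ≤ m →
      |dist (o (u i)) (o (u j)) - ((j : ℝ) - i) * (dist (o a) (o b) / m)| ≤ 2 * R := by
  obtain ⟨γ, h0, h1, hγ, rfl⟩ := hs
  set T := dist (o a) (o b)
  have hm' : (0 : ℝ) < m := by exact_mod_cast hm
  have hl : 0 ≤ T / m := div_nonneg dist_nonneg hm'.le
  have hmem : ∀ i ≤ m, (i : ℝ) * (T / m) ∈ Icc 0 T := by
    intro i hi
    refine ⟨by positivity, ?_⟩
    calc (i : ℝ) * (T / m) ≤ m * (T / m) := by gcongr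
      _ = T := mul_div_cancel₀ T hm'.ne'
  have hpick : ∀ i : ℕ, ∃ u, (i ≤ m → dist (γ (i * (T / m))) (o u) ≤ R) ∧
      (i = 0 → u = a) ∧ (i = m → u = b) := by
    intro i
    by_cases hi0 : i = 0
    · subst hi0
      exact ⟨a, fun _ => by simpa [h0] using hR, fun _ => rfl, fun h => by omega⟩
    by_cases him : i = m
    · subst him
      refine ⟨b, fun _ => ?_, fun h => absurd h hi0, fun _ => rfl⟩
      rwa [mul_div_cancel₀ T hm'.ne', h1, dist_self]
    by_cases hle : i ≤ m
    · obtain ⟨u, hu⟩ := hnear _ ⟨_, hmem i hle, rfl⟩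
      exact ⟨u, fun _ => hu, fun h => absurd h hi0, fun h => absurd h him⟩
    · exact ⟨a, fun h => absurd h hle, fun h => absurd h hi0, fun h => absurd h him⟩
  choose u hu hua hub using hpick
  refine ⟨u, hua 0 rfl, hub m rfl, fun i j hij hjm => ?_⟩
  have hγij : dist (γ (i * (T / m))) (γ (j * (T / m))) = ((j : ℝ) - i) * (T / m) := by
    have hij' : (i : ℝ) ≤ j := by exact_mod_cast hij
    rw [hγ _ (hmem i (hij.trans hjm)) _ (hmem j hjm), abs_of_nonpos (by nlinarith)]
    ring
  calc |dist (o (u i)) (o (u j)) - ((j : ℝ) - i) * (T / m)|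
      = dist (dist (o (u i)) (o (u j))) (dist (γ (i * (T / m))) (γ (j * (T / m)))) := by
        rw [hγij, Real.dist_eq]
    _ ≤ dist (o (u i)) (γ (i * (T / m))) + dist (o (u j)) (γ (j * (T / m))) :=
        dist_dist_dist_le _ _ _ _
    _ ≤ 2 * R := by
        rw [dist_comm, dist_comm (o (u j))]
        linarith [hu i (hij.trans hjm), hu j hjm]

end Geometry

theorem exists_nat_le_div_le_two_mul {L T : ℝ} (hL : 0 < L) (hLT : L ≤ T) :
    ∃ m : ℕ, 0 < m ∧ L ≤ T / m ∧ T / m ≤ 2 * L := by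
  have h1 : 1 ≤ T / L := (one_le_div hL).2 hLT
  have hm : (1 : ℝ) ≤ ⌊T / L⌋₊ := by exact_mod_cast Nat.floor_pos.2 h1
  refine ⟨⌊T / L⌋₊, Nat.floor_pos.2 h1, ?_, ?_⟩
  · rw [le_div_iff₀ (by linarith), mul_comm, ← le_div_iff₀ hL]
    exact Nat.floor_le (by positivity)
  · have hlt := Nat.lt_floor_add_one (T / L)
    rw [div_lt_iff₀ hL] at hlt
    rw [div_le_iff₀ (by linarith)]
    nlinarith

section Orbit

variable {X : Type} [MetricSpace X] {H : Type*} [Group H] (φ : H →* (X ≃ᵢ X))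

theorem dist_orbit_eq (p : X) (f g : H) : dist (φ f p) (φ g p) = dist p (φ (f⁻¹ * g) p) := by
  rw [← (φ f).dist_eq p, ← IsometryEquiv.mul_apply, ← map_mul, mul_inv_cancel_left]

theorem finite_setOf_dist_orbit_le [ProperSpace X]
    (hpd : ∀ C : Set X, IsCompact C → {h : H | ∃ x ∈ C, φ h x ∈ C}.Finite) (p : X) (r : ℝ) :
    {k : H | dist p (φ k p) ≤ r}.Finite :=
  (hpd _ (isCompact_closedBall p r)).subset fun _ hk =>
    ⟨p, Metric.mem_closedBall_self (dist_nonneg.trans hk),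
      by rwa [Metric.mem_closedBall, dist_comm]⟩

theorem QuasiConvexSet.exists_dist_orbit_le {A : Set X} (hA : QuasiConvexSet A)
    (hAcc : ∃ C : Set X, IsCompact C ∧ A ⊆ ⋃ h : H, (φ h) '' C) (p : X) :
    ∃ R, 0 ≤ R ∧ ∀ x ∈ A, ∀ y ∈ A, ∀ s, IsGeodesicSegment x y s →
      ∀ z ∈ s, ∃ u, dist z (φ u p) ≤ R := by
  obtain ⟨ε, hε, hqc⟩ := hA
  obtain ⟨C, hC, hAC⟩ := hAcc
  obtain ⟨D, hD⟩ := hC.isBounded.subset_closedBall p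
  refine ⟨ε + max D 0, by positivity, fun x hx y hy s hs z hz => ?_⟩
  obtain ⟨q, hqA, hzq⟩ := hqc x hx y hy s hs z hz
  obtain ⟨u, c, hc, rfl⟩ := mem_iUnion.1 (hAC hqA)
  refine ⟨u, (dist_triangle _ _ _).trans (add_le_add hzq ?_)⟩
  rw [(φ u).dist_eq]
  exact (Metric.mem_closedBall.1 (hD hc)).trans (le_max_left _ _)

theorem abs_dist_sub_dist_orbit_le (φε : H → X ≃ᵢ X) (p : X) (f g : H) :
    |dist (φε f p) (φε g p) - dist (φ f p) (φ g p)| ≤ dist (φε g p) (φε f (φ (f⁻¹ * g) p)) := by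
  rw [dist_orbit_eq, ← (φε f).dist_eq p, ← Real.dist_eq]
  exact dist_dist_dist_le_right _ _ _

end Orbit

section Perturbation

variable {X : Type} [MetricSpace X] {H : Type*} [Group H]
  (dI : (X ≃ᵢ X) → (X ≃ᵢ X) → ℝ) (S : Set H) (φ : H →* (X ≃ᵢ X))

def IsPerturbation (ε : ℝ) (φε : H → X ≃ᵢ X) : Prop :=
  ∀ f : H, ∀ s ∈ S, dI (φε (f * s)) (φε f * φ s) ≤ ε

def PerturbationStable (k : H) (x : X) : Prop :=
  ∀ σ > 0, ∀ᶠ ε in 𝓝 (0 : ℝ), ∀ φε, IsPerturbation dI S φ ε φε →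
    ∀ f, dist (φε (f * k) x) (φε f (φ k x)) ≤ σ

variable {dI S φ}

theorem perturbationStable_one (x : X) : PerturbationStable dI S φ 1 x :=
  fun _ hσ => Eventually.of_forall fun _ _ _ f => by simpa using hσ.le

theorem PerturbationStable.mul_left
    (hIcont : ∀ x : X, ∀ σ : ℝ, 0 < σ → ∃ τ : ℝ, 0 < τ ∧
      ∀ a b : X ≃ᵢ X, dI a b ≤ τ → dist (a x) (b x) ≤ σ)
    {s k : H} {x : X} (hs : s ∈ S) (hk : PerturbationStable dI S φ k x) :
    PerturbationStable dI S φ (s * k) x := by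
  intro σ hσ
  obtain ⟨τ, hτ, hτσ⟩ := hIcont (φ k x) (σ / 2) (half_pos hσ)
  filter_upwards [hk (σ / 2) (half_pos hσ), eventually_lt_nhds hτ] with ε hε hετ φε hpert f
  calc dist (φε (f * (s * k)) x) (φε f (φ (s * k) x))
      = dist (φε (f * s * k) x) ((φε f * φ s) (φ k x)) := by
        rw [mul_assoc, map_mul, IsometryEquiv.mul_apply, IsometryEquiv.mul_apply]
    _ ≤ dist (φε (f * s * k) x) (φε (f * s) (φ k x))
          + dist (φε (f * s) (φ k x)) ((φε f * φ s) (φ k x)) := dist_triangle _ _ _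
    _ ≤ σ / 2 + σ / 2 :=
        add_le_add (hε φε hpert (f * s)) (hτσ _ _ ((hpert f s hs).trans hετ.le))
    _ = σ := add_halves σ

theorem perturbationStable_of_closure_eq_top (hSsym : ∀ s ∈ S, s⁻¹ ∈ S)
    (hSgen : Subgroup.closure S = ⊤)
    (hIcont : ∀ x : X, ∀ σ : ℝ, 0 < σ → ∃ τ : ℝ, 0 < τ ∧
      ∀ a b : X ≃ᵢ X, dI a b ≤ τ → dist (a x) (b x) ≤ σ)
    (k : H) (x : X) : PerturbationStable dI S φ k x := by
  have hk : k ∈ Subgroup.closure S := hSgen ▸ Subgroup.mem_top k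
  induction hk using Subgroup.closure_induction_left with
  | one => exact perturbationStable_one x
  | mul_left s hs _ _ ih => exact ih.mul_left hIcont hs
  | inv_mul_cancel s hs _ _ ih => exact ih.mul_left hIcont (hSsym s hs)

end Perturbation

section Injectivity

variable {X : Type} [MetricSpace X] {H : Type*} [Group H]
  {dI : (X ≃ᵢ X) → (X ≃ᵢ X) → ℝ} {S : Set H} {φ : H →* (X ≃ᵢ X)}

theorem eventually_perturbation_mul_ne (hφ : Function.Injective φ)
    (hstable : ∀ k x, PerturbationStable dI S φ k x) {B : Set H} (hB : B.Finite)
    (hB1 : (1 : H) ∉ B) :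
    ∀ᶠ ε in 𝓝 (0 : ℝ), ∀ k ∈ B, ∀ φε, IsPerturbation dI S φ ε φε → ∀ f, φε (f * k) ≠ φε f := by
  refine (eventually_all_finite hB).2 fun k hk => ?_
  obtain ⟨x, hx⟩ : ∃ x, φ k x ≠ x := by
    by_contra! hfix
    exact hB1 (hφ (IsometryEquiv.ext hfix |>.trans (map_one φ).symm) ▸ hk)
  have hσ : 0 < dist x (φ k x) / 2 := half_pos (dist_pos.2 hx.symm)
  filter_upwards [hstable k x _ hσ] with ε hε φε hpert f heq
  have := hε φε hpert f
  rw [heq, (φε f).dist_eq] at this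
  linarith

theorem exists_eventually_perturbation_ne_of_le_dist [ProperSpace X] {δ : ℝ}
    (hgeo : GeodesicSpace X) (hX : IsGromovHyperbolic X δ)
    (hpd : ∀ C : Set X, IsCompact C → {h : H | ∃ x ∈ C, φ h x ∈ C}.Finite)
    {p : X} (hstable : ∀ k, PerturbationStable dI S φ k p) {R : ℝ} (hR : 0 ≤ R)
    (hnear : ∀ g h : H, ∀ s, IsGeodesicSegment (φ g p) (φ h p) s →
      ∀ z ∈ s, ∃ u, dist z (φ u p) ≤ R) :
    ∃ L, ∀ᶠ ε in 𝓝 (0 : ℝ), ∀ φε, IsPerturbation dI S φ ε φε →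
      ∀ g h, L ≤ dist (φ g p) (φ h p) → φε g ≠ φε h := by
  -- the perturbed chain has error `c = 2 R + 1`, and `dist_pos_of_chain` needs `4 c + 2 δ < L`
  set L := 4 * (2 * R + 1) + 2 * δ + 1
  have hL : 0 < L := by linarith [hX.nonneg p]
  set F := {k : H | dist p (φ k p) ≤ 4 * L + 2 * R}
  have hF : F.Finite := finite_setOf_dist_orbit_le φ hpd p _
  refine ⟨L, ?_⟩
  filter_upwards [(eventually_all_finite hF).2 fun k _ => hstable k 1 one_pos]
    with ε hε φε hpert g h hgh heq
  obtain ⟨m, hm, hLl, hl⟩ := exists_nat_le_div_le_two_mul hL hgh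
  obtain ⟨s, hs⟩ := hgeo (φ g p) (φ h p)
  obtain ⟨u, hu0, hum, hu⟩ := hs.exists_chain (fun k => φ k p) hR (hnear g h s hs) hm
  refine (hX.dist_pos_of_chain (fun i => φε (u i) p) hm
    (l := dist (φ g p) (φ h p) / m) (c := 2 * R + 1) ?_ (by linarith)).ne' ?_
  · intro i j hij hj hjm
    have hy := hu i j hij hjm
    have hji : ((j : ℝ) - i) ≤ 2 := by
      have : (j : ℝ) ≤ i + 2 := by exact_mod_cast hj
      linarith
    have hk : (u i)⁻¹ * u j ∈ F := by
      change dist p (φ _ p) ≤ _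
      rw [← dist_orbit_eq]
      have : ((j : ℝ) - i) * (dist (φ g p) (φ h p) / m) ≤ 2 * (2 * L) := by gcongr
      linarith [(abs_le.1 hy).2]
    have hx := abs_dist_sub_dist_orbit_le φ φε p (u i) (u j)
    have hclose := hε _ hk φε hpert (u i)
    rw [mul_inv_cancel_left] at hclose
    exact (abs_sub_le _ (dist (φ (u i) p) (φ (u j) p)) _).trans (by linarith)
  · simp [hu0, hum, heq]

end Injectivity

theorem perturbation_injective_general
    {X H : Type} [MetricSpace X] [ProperSpace X] [Group H]
    (δ : ℝ) (hδ : 0 ≤ δ) (hX : DeltaHyperbolic X δ)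
    (S : Set H) (hSsym : ∀ s ∈ S, s⁻¹ ∈ S)
    (hSgen : Subgroup.closure S = ⊤)
    (φ : H →* (X ≃ᵢ X)) (hφ : Function.Injective φ)
    (hpd : ∀ C : Set X, IsCompact C → {h : H | ∃ x ∈ C, φ h x ∈ C}.Finite)
    (A : Set X) (hA : A.Nonempty) (hAqc : QuasiConvexSet A)
    (hAinv : ∀ h : H, ∀ x ∈ A, φ h x ∈ A)
    (hAcc : ∃ C : Set X, IsCompact C ∧ A ⊆ ⋃ h : H, (φ h) '' C)
    (dI : (X ≃ᵢ X) → (X ≃ᵢ X) → ℝ)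
    (hIcont : ∀ x : X, ∀ σ : ℝ, 0 < σ → ∃ τ : ℝ, 0 < τ ∧
      ∀ a b : X ≃ᵢ X, dI a b ≤ τ → dist (a x) (b x) ≤ σ) :
    ∃ ε₀ : ℝ, 0 < ε₀ ∧ ∀ ε : ℝ, 0 ≤ ε → ε ≤ ε₀ →
      ∀ φε : H → (X ≃ᵢ X),
        (∀ f : H, ∀ s ∈ S, dI (φε (f * s)) (φε f * φ s) ≤ ε) →
        Function.Injective φε := by
  obtain ⟨p, hp⟩ := hA
  have hstable := perturbationStable_of_closure_eq_top (φ := φ) hSsym hSgen hIcont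
  obtain ⟨R, hR, hnear⟩ := hAqc.exists_dist_orbit_le φ hAcc p
  obtain ⟨L, hfar⟩ := exists_eventually_perturbation_ne_of_le_dist hX.1
    (hX.isGromovHyperbolic hδ) hpd (fun k => hstable k p) hR
    fun g h s hs => hnear _ (hAinv g p hp) _ (hAinv h p hp) s hs
  have hB : {k : H | k ≠ 1 ∧ dist p (φ k p) < L}.Finite :=
    (finite_setOf_dist_orbit_le φ hpd p L).subset fun k hk => hk.2.le
  obtain ⟨ε₀, hε₀, hsmall⟩ := Metric.eventually_nhds_iff.1
    (hfar.and (eventually_perturbation_mul_ne hφ hstable hB fun h => h.1 rfl))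
  refine ⟨ε₀ / 2, half_pos hε₀, fun ε hε hεε₀ φε hpert g h heq => ?_⟩
  obtain ⟨hfarε, hshortε⟩ :=
    hsmall (y := ε) (by rw [Real.dist_eq, sub_zero, abs_of_nonneg hε]; linarith)
  by_contra hgh
  rcases le_or_gt L (dist (φ g p) (φ h p)) with hL | hL
  · exact hfarε φε hpert g h hL heq
  · refine hshortε (g⁻¹ * h) ⟨?_, by rwa [← dist_orbit_eq]⟩ φε hpert g ?_
    · exact fun h1 => hgh (inv_mul_eq_one.1 h1)
    · rw [mul_inv_cancel_left, heq]

/-- with `X` proper Gromov-hyperbolic and `φ : H → Isom(X)` injective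
onto a quasi-convex cocompact subgroup, there is `ε₀ > 0` such that every
`ε`-perturbation `φ_ε` of `φ` with `0 ≤ ε ≤ ε₀` is injective. -/
theorem perturbation_injective
    {X H : Type} [MetricSpace X] [ProperSpace X] [Group H] [Infinite H]
    (δ : ℝ) (hδ : 0 ≤ δ) (hX : DeltaHyperbolic X δ)
    (S : Set H) (hSfin : S.Finite) (hSsym : ∀ s ∈ S, s⁻¹ ∈ S)
    (hSgen : Subgroup.closure S = ⊤)
    (φ : H →* (X ≃ᵢ X)) (hφ : Function.Injective φ)
    (hpd : ∀ C : Set X, IsCompact C → {h : H | ∃ x ∈ C, φ h x ∈ C}.Finite)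
    (A : Set X) (hA : A.Nonempty) (hAqc : QuasiConvexSet A)
    (hAinv : ∀ h : H, ∀ x ∈ A, φ h x ∈ A)
    (hAcc : ∃ C : Set X, IsCompact C ∧ A ⊆ ⋃ h : H, (φ h) '' C)
    (dI : (X ≃ᵢ X) → (X ≃ᵢ X) → ℝ)
    (hIsymm : ∀ a b, dI a b = dI b a)
    (hItri : ∀ a b c', dI a c' ≤ dI a b + dI b c')
    (hIinv : ∀ k a b, dI (k * a) (k * b) = dI a b)
    (hIcont : ∀ x : X, ∀ σ : ℝ, 0 < σ → ∃ τ : ℝ, 0 < τ ∧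
      ∀ a b : X ≃ᵢ X, dI a b ≤ τ → dist (a x) (b x) ≤ σ) :
    ∃ ε₀ : ℝ, 0 < ε₀ ∧ ∀ ε : ℝ, 0 ≤ ε → ε ≤ ε₀ →
      ∀ φε : H → (X ≃ᵢ X),
        (∀ f : H, ∀ s ∈ S, dI (φε (f * s)) (φε f * φ s) ≤ ε) →
        Function.Injective φε :=
  perturbation_injective_general δ hδ hX S hSsym hSgen φ hφ hpd A hA hAqc hAinv hAcc dI hIcont
end
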